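/- arXiv:1310.6011 — 9 statements merged into one kernel-verified Lean document; each statement's English description precedes it below -/
import Mathlib

section
/- Let K ≥ 1, let u_0, …, u_{K−1} be distinct nonzero complex numbers and α_0, …, α_{K−1} be nonzero complex numbers, and set y_n = Σ_{k=0}^{K−1} α_k u_k^n for n ≥ 0. For any integer ℓ ≥ 0, let T_{K,ℓ} be the K × (K+1) Toeplitz matrix whose (r, s) entry (0 ≤ r ≤ K−1, 0 ≤ s ≤ K, 0-based) is y_{ℓ+K+r−s}. Then rank T_{K,ℓ} = K. -/
/-!
Reversing the order of the first `K` columns of `T` gives the Hankel matrix `(y (ℓ + r + j))`,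
which factors as `Vᵀ D V` with `V` the Vandermonde matrix of the nodes and
`D = diag (α k * u k ^ ℓ)`. Distinct nodes and nonzero weights make all three factors invertible,
so this `K × K` submatrix has rank `K`, while `T` has only `K` rows.
-/

open Matrix

theorem Matrix.vandermonde_transpose_mul_diagonal_mul_vandermonde {R : Type*} [CommRing R]
    {n : ℕ} (u w : Fin n → R) :
    (vandermonde u)ᵀ * diagonal w * vandermonde u =
      of fun i j : Fin n => ∑ k, w k * u k ^ ((i : ℕ) + j) := by
  ext i j
  simp only [mul_apply (M := _ * diagonal w), mul_diagonal, transpose_apply, vandermonde_apply,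
    of_apply, pow_add]
  exact Finset.sum_congr rfl fun k _ => by ring

theorem Matrix.isUnit_vandermonde_transpose_mul_diagonal_mul_vandermonde {F : Type*} [Field F]
    {n : ℕ} {u w : Fin n → F} (hu : Function.Injective u) (hw : ∀ k, w k ≠ 0) :
    IsUnit ((vandermonde u)ᵀ * diagonal w * vandermonde u) := by
  have hV : (vandermonde u).det ≠ 0 := det_vandermonde_ne_zero_iff.mpr hu
  have hD : (diagonal w).det ≠ 0 := by
    rw [det_diagonal]
    exact Finset.prod_ne_zero_iff.mpr fun k _ => hw k
  rw [isUnit_iff_isUnit_det, det_mul, det_mul, det_transpose, isUnit_iff_ne_zero]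
  exact mul_ne_zero (mul_ne_zero hV hD) hV

theorem stmt1_general (K : ℕ) (u α : Fin K → ℂ)
    (hu : ∀ k, u k ≠ 0) (huinj : Function.Injective u) (hα : ∀ k, α k ≠ 0)
    (y : ℕ → ℂ) (hy : ∀ n : ℕ, y n = ∑ k : Fin K, α k * u k ^ n)
    (ℓ : ℕ) (T : Matrix (Fin K) (Fin (K + 1)) ℂ)
    (hT : ∀ (r : Fin K) (s : Fin (K + 1)), T r s = y (ℓ + K + (r : ℕ) - (s : ℕ))) :
    T.rank = K := by
  set w : Fin K → ℂ := fun k => α k * u k ^ ℓ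
  have hankel : T.submatrix id (fun j => Fin.rev (Fin.castSucc j)) =
      (vandermonde u)ᵀ * diagonal w * vandermonde u := by
    rw [vandermonde_transpose_mul_diagonal_mul_vandermonde]
    ext r j
    simp only [submatrix_apply, id_eq, of_apply, hT, hy, Fin.val_rev, Fin.val_castSucc, w]
    refine Finset.sum_congr rfl fun k _ => ?_
    rw [show ℓ + K + (r : ℕ) - (K + 1 - (j + 1)) = ℓ + (r + j) by omega, pow_add, mul_assoc]
  have hw : ∀ k, w k ≠ 0 := fun k => mul_ne_zero (hα k) (pow_ne_zero ℓ (hu k))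
  have hrank : (T.submatrix id (fun j => Fin.rev (Fin.castSucc j))).rank = K := by
    rw [hankel, rank_of_isUnit _ (isUnit_vandermonde_transpose_mul_diagonal_mul_vandermonde
      huinj hw), Fintype.card_fin]
  exact le_antisymm T.rank_le_height (hrank.symm.le.trans (T.rank_submatrix_le _ _))

/-- **Full rank of the Prony/Toeplitz matrix.** If `y n = ∑ k, α k * u k ^ n` is a sum of
`K ≥ 1` exponentials with distinct nonzero nodes `u k` and nonzero weights `α k`, then for any
`ℓ ≥ 0` the `K × (K+1)` Toeplitz matrix `T` with entries `T r s = y (ℓ + K + r - s)` has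
rank exactly `K`. -/
theorem stmt1 (K : ℕ) (hK : 1 ≤ K) (u α : Fin K → ℂ)
    (hu : ∀ k, u k ≠ 0) (huinj : Function.Injective u) (hα : ∀ k, α k ≠ 0)
    (y : ℕ → ℂ) (hy : ∀ n : ℕ, y n = ∑ k : Fin K, α k * u k ^ n)
    (ℓ : ℕ) (T : Matrix (Fin K) (Fin (K + 1)) ℂ)
    (hT : ∀ (r : Fin K) (s : Fin (K + 1)), T r s = y (ℓ + K + (r : ℕ) - (s : ℕ))) :
    T.rank = K :=
  stmt1_general K u α hu huinj hα y hy ℓ T hT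
end

section
/- Let K ≥ 1, let u_0, …, u_{K−1} be distinct nonzero complex numbers and α_0, …, α_{K−1} be arbitrary complex numbers, and set y_n = Σ_{k=0}^{K−1} α_k u_k^n for n ≥ 0. For any integer ℓ ≥ 0, let T_{K,ℓ} be the K × (K+1) Toeplitz matrix whose (r, s) entry is y_{ℓ+K+r−s}. Then rank T_{K,ℓ} equals the number of indices k with α_k ≠ 0. In particular, if the true number of active exponentials is K̃ < K, the matrix T_{K,ℓ} is rank-deficient with rank exactly K̃. -/
open scoped Classical

/-!
With `c k = α k * u k ^ ℓ` the Toeplitz matrix factors as `T = Vᵀ * diagonal c * W`, where `V` is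
the Vandermonde matrix of the nodes and `W k s = u k ^ (K - s)`. Distinct nodes make `Vᵀ`
invertible and the rows of `W` linearly independent (its columns `K, …, 1` are those of `V`), so
neither factor changes the rank. Hence `rank T = rank (diagonal c)`, the number of nonzero `c k`,
which are the nonzero `α k` because the nodes are nonzero.
-/

namespace Matrix

theorem rank_mul_eq_right_of_mulVec_injective {R l m n : Type*} [CommRing R]
    [Fintype m] [Fintype n] {A : Matrix l m R} (hA : Function.Injective A.mulVec)
    (B : Matrix m n R) : (A * B).rank = B.rank := by
  rw [rank, rank, mulVecLin_mul, LinearMap.range_comp,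
    ← (Submodule.equivMapOfInjective A.mulVecLin hA _).finrank_eq]

theorem rank_mul_eq_left_of_vecMul_injective {R l m n : Type*} [Field R]
    [Fintype l] [Fintype m] [Fintype n] {A : Matrix m n R}
    (hA : Function.Injective fun v => v ᵥ* A) (B : Matrix l m R) : (B * A).rank = B.rank := by
  rw [← rank_transpose, transpose_mul, rank_mul_eq_right_of_mulVec_injective, rank_transpose]
  rwa [show Aᵀ.mulVec = fun v => v ᵥ* A from funext (mulVec_transpose A)]

def reverseVandermonde {R : Type*} [CommRing R] {K : ℕ} (u : Fin K → R) :
    Matrix (Fin K) (Fin (K + 1)) R :=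
  of fun k s => u k ^ (K - s : ℕ)

theorem reverseVandermonde_vecMul_injective {R : Type*} [Field R] {K : ℕ} {u : Fin K → R}
    (hu : Function.Injective u) : Function.Injective fun v => v ᵥ* reverseVandermonde u := by
  intro x y hxy
  refine vecMul_injective_iff_isUnit.2 ((isUnit_iff_isUnit_det _).2
    (det_vandermonde_ne_zero_iff.2 hu).isUnit) (funext fun j => ?_)
  have hj := congrFun hxy (Fin.rev j.castSucc)
  have hexp : K - (K - (j : ℕ)) = j := by omega
  simpa [vecMul, dotProduct, reverseVandermonde, vandermonde_apply, hexp] using hj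

theorem vandermonde_transpose_mul_diagonal_mul_reverseVandermonde_apply {R : Type*} [CommRing R]
    {K : ℕ} (u α : Fin K → R) (ℓ : ℕ) (r : Fin K) (s : Fin (K + 1)) :
    ((vandermonde u)ᵀ * diagonal (fun k => α k * u k ^ ℓ) * reverseVandermonde u) r s =
      ∑ k, α k * u k ^ (ℓ + K + r - s) := by
  simp only [mul_apply, diagonal_apply, transpose_apply, vandermonde_apply, reverseVandermonde,
    of_apply, mul_ite, mul_zero, Finset.sum_ite_eq', Finset.mem_univ, if_true]
  refine Finset.sum_congr rfl fun k _ => ?_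
  have hexp : ℓ + K + r - s = r + ℓ + (K - s) := by omega
  rw [hexp, pow_add, pow_add]
  ring

end Matrix

open Matrix

theorem stmt2_general (K : ℕ) (u α : Fin K → ℂ)
    (hu : ∀ k, u k ≠ 0) (huinj : Function.Injective u)
    (y : ℕ → ℂ) (hy : ∀ n : ℕ, y n = ∑ k : Fin K, α k * u k ^ n)
    (ℓ : ℕ) (T : Matrix (Fin K) (Fin (K + 1)) ℂ)
    (hT : ∀ (r : Fin K) (s : Fin (K + 1)), T r s = y (ℓ + K + (r : ℕ) - (s : ℕ))) :
    T.rank = (Finset.univ.filter (fun k => α k ≠ 0)).card := by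
  have hfactor : T = (vandermonde u)ᵀ * diagonal (fun k => α k * u k ^ ℓ) *
      reverseVandermonde u := by
    ext r s
    rw [hT, hy, vandermonde_transpose_mul_diagonal_mul_reverseVandermonde_apply]
  rw [hfactor, Matrix.mul_assoc, rank_mul_eq_right_of_det_ne_zero _ _
      (by rwa [det_transpose, det_vandermonde_ne_zero_iff]),
    rank_mul_eq_left_of_vecMul_injective (reverseVandermonde_vecMul_injective huinj),
    rank_diagonal, Fintype.card_subtype]
  simp only [ne_eq, mul_eq_zero, pow_eq_zero_iff', hu, false_and, or_false]

/-- **Rank of the Prony/Toeplitz matrix equals the number of active exponentials.**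
If `y n = ∑ k, α k * u k ^ n` with distinct nonzero nodes `u k` and arbitrary weights `α k`,
then for any `ℓ ≥ 0` the `K × (K+1)` Toeplitz matrix `T` with entries
`T r s = y (ℓ + K + r - s)` has rank equal to `#{k | α k ≠ 0}`; in particular if only
`K̃ < K` exponentials are active the matrix is rank-deficient with rank `K̃`. -/
theorem stmt2 (K : ℕ) (hK : 1 ≤ K) (u α : Fin K → ℂ)
    (hu : ∀ k, u k ≠ 0) (huinj : Function.Injective u)
    (y : ℕ → ℂ) (hy : ∀ n : ℕ, y n = ∑ k : Fin K, α k * u k ^ n)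
    (ℓ : ℕ) (T : Matrix (Fin K) (Fin (K + 1)) ℂ)
    (hT : ∀ (r : Fin K) (s : Fin (K + 1)), T r s = y (ℓ + K + (r : ℕ) - (s : ℕ))) :
    T.rank = (Finset.univ.filter (fun k => α k ≠ 0)).card :=
  stmt2_general K u α hu huinj y hy ℓ T hT
end

section
/- Let K ≥ 1, let u_0, …, u_{K−1} be distinct nonzero complex numbers and α_0, …, α_{K−1} be nonzero complex numbers, set y_n = Σ_{k=0}^{K−1} α_k u_k^n, fix ℓ ≥ 0, and let T_{K,ℓ} be the K × (K+1) Toeplitz matrix with (r, s) entry y_{ℓ+K+r−s}. Let h = (1, h_1, …, h_K)ᵀ where ∏_{k}(x − u_k) = x^K + h_1 x^{K−1} + … + h_K. Then the null space of T_{K,ℓ} is one-dimensional and is spanned by h; consequently, h is the unique vector v ∈ ℂ^{K+1} with first coordinate equal to 1 satisfying T_{K,ℓ} v = 0. -/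
/-!
Write `Q_v = ∑ⱼ vⱼ X^(K-j)` for `v ∈ ℂ^(K+1)`. Expanding `y` shows that row `r` of `T v` equals
`∑ₖ αₖ uₖ^(ℓ+r) Q_v(uₖ)`; as the `K × K` Vandermonde matrix of the distinct nodes is invertible and
`αₖ uₖ^ℓ ≠ 0`, `T v = 0` holds iff `Q_v` vanishes at every node. A polynomial of degree `≤ K`
vanishing at the `K` distinct nodes is a multiple of the Prony polynomial `P = ∏ₖ (X - uₖ)`, and
`Q_h = P`; so the null space is `ℂ h`, and `h₀ = 1` pins down the scalar.
-/

open Polynomial Finset Matrix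

section DescendingPoly

variable {R : Type*} [CommRing R] {K : ℕ}

noncomputable def descendingPoly (K : ℕ) (v : Fin (K + 1) → R) : R[X] :=
  ∑ j : Fin (K + 1), C (v j) * X ^ (K - (j : ℕ))

theorem coeff_descendingPoly (v : Fin (K + 1) → R) (j : Fin (K + 1)) :
    (descendingPoly K v).coeff (K - (j : ℕ)) = v j := by
  simp only [descendingPoly, finsetSum_coeff, coeff_C_mul, coeff_X_pow]
  rw [Finset.sum_eq_single j (fun i _ hij => by simp [show K - (j : ℕ) ≠ K - (i : ℕ) by omega])
    (by simp)]
  simp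

theorem descendingPoly_injective : Function.Injective (descendingPoly (R := R) K) :=
  fun v w hvw => funext fun j => by rw [← coeff_descendingPoly v, hvw, coeff_descendingPoly]

theorem descendingPoly_smul (c : R) (v : Fin (K + 1) → R) :
    descendingPoly K (c • v) = C c * descendingPoly K v := by
  simp only [descendingPoly, Finset.mul_sum, Pi.smul_apply, smul_eq_mul, C_mul, mul_assoc]

theorem natDegree_descendingPoly_le (v : Fin (K + 1) → R) : (descendingPoly K v).natDegree ≤ K :=
  natDegree_sum_le_of_forall_le _ _ fun _ _ =>
    (natDegree_C_mul_le _ _).trans <| (natDegree_X_pow_le _).trans (Nat.sub_le _ _)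

theorem descendingPoly_coeff {p : R[X]} (hp : p.natDegree ≤ K) :
    descendingPoly K (fun j => p.coeff (K - (j : ℕ))) = p := by
  ext n
  rcases le_or_gt n K with hn | hn
  · simpa [Nat.sub_sub_self hn] using coeff_descendingPoly (fun j => p.coeff (K - (j : ℕ)))
      ⟨K - n, Nat.lt_succ_of_le (Nat.sub_le K n)⟩
  · rw [coeff_eq_zero_of_natDegree_lt (hp.trans_lt hn),
      coeff_eq_zero_of_natDegree_lt ((natDegree_descendingPoly_le _).trans_lt hn)]

theorem eval_descendingPoly (v : Fin (K + 1) → R) (x : R) :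
    (descendingPoly K v).eval x = ∑ j : Fin (K + 1), v j * x ^ (K - (j : ℕ)) := by
  simp [descendingPoly, eval_finsetSum]

end DescendingPoly

section Toeplitz

variable {R : Type*} [CommRing R] {ι : Type*} [Fintype ι]

def pronyToeplitz (y : ℕ → R) (K ℓ : ℕ) : Matrix (Fin K) (Fin (K + 1)) R :=
  Matrix.of fun r s => y (ℓ + K + r - s)

theorem pronyToeplitz_mulVec_apply (α u : ι → R) (K ℓ : ℕ) (v : Fin (K + 1) → R) (r : Fin K) :
    (pronyToeplitz (fun n => ∑ k, α k * u k ^ n) K ℓ *ᵥ v) r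
      = ∑ k, α k * u k ^ (ℓ + r) * (descendingPoly K v).eval (u k) := by
  have hexp (s : Fin (K + 1)) : ℓ + K + (r : ℕ) - s = (ℓ + r) + (K - s) := by omega
  simp only [mulVec, dotProduct, pronyToeplitz, of_apply, hexp, eval_descendingPoly,
    Finset.sum_mul, Finset.mul_sum, pow_add]
  rw [Finset.sum_comm]
  exact Finset.sum_congr rfl fun k _ => Finset.sum_congr rfl fun s _ => by ring

theorem pronyToeplitz_mulVec_eq_zero_iff [IsDomain R] {K : ℕ} {α u : Fin K → R}
    (hu : ∀ k, u k ≠ 0) (huinj : Function.Injective u) (hα : ∀ k, α k ≠ 0) (ℓ : ℕ)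
    (v : Fin (K + 1) → R) :
    pronyToeplitz (fun n => ∑ k, α k * u k ^ n) K ℓ *ᵥ v = 0 ↔
      ∀ k, (descendingPoly K v).eval (u k) = 0 := by
  simp only [funext_iff, Pi.zero_apply, pronyToeplitz_mulVec_apply]
  refine ⟨fun hv k => ?_, fun hroot r => by simp [hroot]⟩
  have hweights := congrFun (eq_zero_of_forall_pow_sum_mul_pow_eq_zero huinj
    (v := fun k => α k * u k ^ ℓ * (descendingPoly K v).eval (u k))
    fun r => by simpa [pow_add, mul_assoc, mul_comm, mul_left_comm] using hv r) k
  simpa [hα k, hu k] using hweights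

end Toeplitz

theorem prod_X_sub_C_dvd_of_eval_eq_zero {F ι : Type*} [Field F] [Fintype ι] {u : ι → F}
    (hu : Function.Injective u) {p : F[X]} (hroot : ∀ k, p.eval (u k) = 0) :
    (∏ k, (X - C (u k))) ∣ p :=
  Fintype.prod_dvd_of_coprime (pairwise_coprime_X_sub_C hu) fun k => dvd_iff_isRoot.mpr (hroot k)

theorem stmt3_general (K : ℕ) (u α : Fin K → ℂ)
    (hu : ∀ k, u k ≠ 0) (huinj : Function.Injective u) (hα : ∀ k, α k ≠ 0)
    (y : ℕ → ℂ) (hy : ∀ n : ℕ, y n = ∑ k : Fin K, α k * u k ^ n)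
    (ℓ : ℕ) (T : Matrix (Fin K) (Fin (K + 1)) ℂ)
    (hT : ∀ (r : Fin K) (s : Fin (K + 1)), T r s = y (ℓ + K + (r : ℕ) - (s : ℕ)))
    (h : Fin (K + 1) → ℂ)
    (hh : ∀ j : Fin (K + 1),
      h j = (∏ k : Fin K, (Polynomial.X - Polynomial.C (u k))).coeff (K - (j : ℕ))) :
    T.mulVec h = 0 ∧
      (∀ v : Fin (K + 1) → ℂ, T.mulVec v = 0 → ∃ c : ℂ, v = c • h) ∧
      (∀ v : Fin (K + 1) → ℂ, v 0 = 1 → T.mulVec v = 0 → v = h) := by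
  set P : ℂ[X] := ∏ k : Fin K, (X - C (u k))
  have hPmonic : P.Monic := monic_prod_X_sub_C _ _
  have hPdeg : P.natDegree = K := by simp [P]
  have hQh : descendingPoly K h = P := by
    rw [funext hh]; exact descendingPoly_coeff hPdeg.le
  have hToeplitz : T = pronyToeplitz (fun n => ∑ k, α k * u k ^ n) K ℓ := by
    ext r s; rw [hT, hy]; rfl
  have hker (v : Fin (K + 1) → ℂ) : T *ᵥ v = 0 ↔ ∀ k, (descendingPoly K v).eval (u k) = 0 := by
    rw [hToeplitz]; exact pronyToeplitz_mulVec_eq_zero_iff hu huinj hα ℓ v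
  have hspan (v : Fin (K + 1) → ℂ) (hv : T *ᵥ v = 0) : v = (descendingPoly K v).leadingCoeff • h := by
    refine descendingPoly_injective ?_
    rw [descendingPoly_smul, hQh]
    exact eq_leadingCoeff_mul_of_monic_of_dvd_of_natDegree_le hPmonic
      (prod_X_sub_C_dvd_of_eval_eq_zero huinj ((hker v).mp hv))
      ((natDegree_descendingPoly_le v).trans_eq hPdeg.symm)
  have hh0 : h 0 = 1 := by
    rw [hh, Fin.val_zero, Nat.sub_zero, ← hPdeg]; exact hPmonic.coeff_natDegree
  refine ⟨(hker h).mpr fun k => ?_, fun v hv => ⟨_, hspan v hv⟩, fun v hv0 hv => ?_⟩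
  · rw [hQh, eval_prod]
    exact Finset.prod_eq_zero (Finset.mem_univ k) (by simp)
  · have hc := congrFun (hspan v hv) 0
    rw [Pi.smul_apply, hv0, hh0, smul_eq_mul, mul_one] at hc
    rw [hspan v hv, ← hc, one_smul]

/-- **The Prony vector spans the null space of the Toeplitz matrix.**
For `y n = ∑ k, α k * u k ^ n` with distinct nonzero nodes and nonzero weights, and `T` the
`K × (K+1)` Toeplitz matrix `T r s = y (ℓ + K + r - s)`, the vector
`h = (1, h_1, …, h_K)` of coefficients of `∏ k, (X - u k)` satisfies `T h = 0`, every vector in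
the null space of `T` is a scalar multiple of `h`, and `h` is the unique null vector whose first
coordinate equals `1`. -/
theorem stmt3 (K : ℕ) (hK : 1 ≤ K) (u α : Fin K → ℂ)
    (hu : ∀ k, u k ≠ 0) (huinj : Function.Injective u) (hα : ∀ k, α k ≠ 0)
    (y : ℕ → ℂ) (hy : ∀ n : ℕ, y n = ∑ k : Fin K, α k * u k ^ n)
    (ℓ : ℕ) (T : Matrix (Fin K) (Fin (K + 1)) ℂ)
    (hT : ∀ (r : Fin K) (s : Fin (K + 1)), T r s = y (ℓ + K + (r : ℕ) - (s : ℕ)))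
    (h : Fin (K + 1) → ℂ)
    (hh : ∀ j : Fin (K + 1),
      h j = (∏ k : Fin K, (Polynomial.X - Polynomial.C (u k))).coeff (K - (j : ℕ))) :
    T.mulVec h = 0 ∧
      (∀ v : Fin (K + 1) → ℂ, T.mulVec v = 0 → ∃ c : ℂ, v = c • h) ∧
      (∀ v : Fin (K + 1) → ℂ, v 0 = 1 → T.mulVec v = 0 → v = h) :=
  stmt3_general K u α hu huinj hα y hy ℓ T hT h hh
end

section
/- Let N ≥ 1 and K ≥ 0 satisfy 2K ≤ N, and let F be the N × N unitary DFT matrix. If c, c′ ∈ ℂ^N each have at most K nonzero entries and there exists ℓ ∈ {0, …, N−1} such that (Fc)_{(ℓ+j) mod N} = (Fc′)_{(ℓ+j) mod N} for all j = 0, 1, …, 2K−1, then c = c′. In other words, a K-sparse vector c is uniquely determined by any 2K consecutive (modulo N) entries of Fc. -/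
/-- The `N × N` unitary DFT matrix, `F n m = exp (2πi n m / N) / √N`. -/
noncomputable def dft (N : ℕ) : Matrix (Fin N) (Fin N) ℂ :=
  fun n m => Complex.exp (2 * Real.pi * Complex.I * (n : ℕ) * (m : ℕ) / N) / (Real.sqrt N : ℂ)

open scoped Classical in
/-- The number of nonzero entries (the "ℓ₀ norm") of a vector. -/
noncomputable def l0 {ι : Type*} [Fintype ι] (x : ι → ℂ) : ℕ :=
  (Finset.univ.filter (fun i => x i ≠ 0)).card


/-!
The window condition says that the first `2K` power moments `∑ₘ bₘ (ωᵐ)ʲ`, `j < 2K`, of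
`bₘ = (cₘ - c'ₘ) (ωᵐ)^ℓ` vanish, where `ω = e^{2πi/N}`. The vector `b` is supported on at most
`2K` indices and the nodes `ωᵐ` are distinct, so restricted to the support this is a square
Vandermonde system with nonzero determinant; hence `b = 0`, and `c = c'` as `ω ≠ 0`.
-/

open Finset

theorem eq_zero_of_forall_sum_mul_pow_eq_zero {ι R : Type*} [Fintype ι] [CommRing R] [IsDomain R]
    {x v : ι → R} {s : Finset ι} (hxs : ∀ i ∉ s, x i = 0) (hv : Set.InjOn v s) {n : ℕ}
    (hn : #s ≤ n) (h : ∀ j < n, ∑ i, x i * v i ^ j = 0) : x = 0 := by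
  have hsum (j : ℕ) (hj : j < n) : ∑ i ∈ s, x i * v i ^ j = 0 := by
    rw [← h j hj]
    exact sum_subset (subset_univ s) fun i _ hi => by rw [hxs i hi, zero_mul]
  let e := s.equivFin.symm
  have hcoeff : (fun k => x (e k)) = 0 := by
    refine Matrix.eq_zero_of_forall_pow_sum_mul_pow_eq_zero
      (f := fun k => v (e k)) (fun k k' hkk' => e.injective (Subtype.ext ?_)) fun j => ?_
    · exact hv (e k).2 (e k').2 hkk'
    · rw [← hsum j (j.2.trans_le hn), ← sum_coe_sort s]
      exact e.sum_comp fun i => x i * v i ^ (j : ℕ)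
  funext i
  by_cases hi : i ∈ s
  · simpa [e] using congr_fun hcoeff (s.equivFin ⟨i, hi⟩)
  · exact hxs i hi

open scoped Classical in
theorem card_filter_ne_le_l0_add_l0 {ι : Type*} [Fintype ι] (x y : ι → ℂ) :
    #{i | x i ≠ y i} ≤ l0 x + l0 y := by
  refine (card_le_card fun i hi => ?_).trans (card_union_le _ _)
  simp only [mem_filter, mem_univ, true_and, mem_union] at hi ⊢
  by_contra! hxy
  exact hi (hxy.1.trans hxy.2.symm)

noncomputable def dftRoot (N : ℕ) : ℂ := Complex.exp (2 * Real.pi * Complex.I / N)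

theorem isPrimitiveRoot_dftRoot {N : ℕ} (hN : N ≠ 0) : IsPrimitiveRoot (dftRoot N) N :=
  Complex.isPrimitiveRoot_exp N hN

theorem dft_apply (N : ℕ) (n m : Fin N) :
    dft N n m = dftRoot N ^ ((n : ℕ) * m) / (Real.sqrt N : ℂ) := by
  rw [dft, dftRoot, ← Complex.exp_nat_mul]
  push_cast
  ring_nf

theorem dft_mulVec_apply_of_mod_eq {N : ℕ} (c : Fin N → ℂ) {n : Fin N} {k : ℕ}
    (hk : k % N = n) :
    (dft N).mulVec c n = (Real.sqrt N : ℂ)⁻¹ * ∑ m, c m * (dftRoot N ^ (m : ℕ)) ^ k := by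
  have hN : N ≠ 0 := by rintro rfl; exact n.elim0
  simp only [Matrix.mulVec, dotProduct, dft_apply, mul_sum]
  refine sum_congr rfl fun m _ => ?_
  have hroot : (dftRoot N ^ (m : ℕ)) ^ N = 1 := by
    rw [← pow_mul, mul_comm, pow_mul, (isPrimitiveRoot_dftRoot hN).pow_eq_one, one_pow]
  rw [pow_eq_pow_mod k hroot, hk, ← pow_mul, mul_comm (m : ℕ)]
  ring

/-- **A `K`-sparse vector is determined by any `2K` consecutive (mod `N`) entries of its DFT.**
If `c, c'` each have at most `K` nonzero entries, `2K ≤ N`, and `F c` agrees with `F c'` on the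
cyclic window of length `2K` starting at some `ℓ ∈ {0, …, N-1}`, then `c = c'`. -/
theorem stmt4 (N K : ℕ) (hN : 1 ≤ N)
    (c c' : Fin N → ℂ) (hc : l0 c ≤ K) (hc' : l0 c' ≤ K)
    (ℓ : ℕ)
    (hagree : ∀ j < 2 * K,
      (dft N).mulVec c ⟨(ℓ + j) % N, Nat.mod_lt _ (by omega)⟩ =
      (dft N).mulVec c' ⟨(ℓ + j) % N, Nat.mod_lt _ (by omega)⟩) :
    c = c' := by
  classical
  have hω := isPrimitiveRoot_dftRoot (N := N) (by omega)
  set ω := dftRoot N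
  have hsqrt : (Real.sqrt N : ℂ) ≠ 0 :=
    Complex.ofReal_ne_zero.mpr (Real.sqrt_ne_zero'.mpr (by exact_mod_cast hN))
  have hmoments (j : ℕ) (hj : j < 2 * K) :
      ∑ m, (c m - c' m) * (ω ^ (m : ℕ)) ^ ℓ * (ω ^ (m : ℕ)) ^ j = 0 := by
    have h := hagree j hj
    rw [dft_mulVec_apply_of_mod_eq c rfl, dft_mulVec_apply_of_mod_eq c' rfl,
      mul_right_inj' (inv_ne_zero hsqrt), ← sub_eq_zero, ← sum_sub_distrib] at h
    rw [← h]
    exact sum_congr rfl fun m _ => by ring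
  have hweighted := eq_zero_of_forall_sum_mul_pow_eq_zero (s := {m | c m ≠ c' m}) (n := 2 * K)
    (fun m hm => by simp_all) (fun m _ m' _ h => Fin.ext (hω.pow_inj m.2 m'.2 h))
    ((card_filter_ne_le_l0_add_l0 c c').trans (by omega)) hmoments
  funext m
  have hm := congr_fun hweighted m
  rw [Pi.zero_apply, mul_eq_zero, sub_eq_zero] at hm
  exact hm.resolve_right (pow_ne_zero _ (pow_ne_zero _ (hω.ne_zero (by omega))))
end

section
/- Let N ≥ 1 and let F be the N × N unitary DFT matrix. Suppose y = F x_p + x_q where x_p, x_q ∈ ℂ^N, K_p := ‖x_p‖₀ ≥ 1, K_q := ‖x_q‖₀ ≥ 1, and K_p K_q < N/2. Then there exists ℓ ∈ {0, …, N−1} such that y_{(ℓ+j) mod N} = (F x_p)_{(ℓ+j) mod N} for all j = 0, 1, …, 2K_p − 1; moreover, x_p is the unique vector in ℂ^N with at most K_p nonzero entries whose DFT agrees with y on this cyclic window, and hence the pair (x_p, x_q) is determined by y together with ℓ and K_p. -/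
/-!
Each spike of `x_q` spoils only the `2 K_p` windows of length `2 K_p` that contain it, so
`2 K_p K_q < N` leaves a window on which `y = F x_p`. Two `K_p`-sparse vectors whose DFTs
agree on `2 K_p` cyclically consecutive frequencies differ by a `2 K_p`-sparse vector `d` with
`∑ₘ d_m ω^{m ℓ} (ω^m)^j = 0` for `j < 2 K_p`: a Vandermonde system in the distinct nodes
`ω^m` (`ω` a primitive `N`-th root of unity) with no more unknowns than equations, so `d = 0`.
-/

open Finset Matrix
open scoped Pointwise

theorem Finset.forall_eq_zero_of_sum_mul_pow_eq_zero {R ι : Type*} [CommRing R] [IsDomain R]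
    {s : Finset ι} {f v : ι → R} (hf : Set.InjOn f s) {M : ℕ} (hs : #s ≤ M)
    (h : ∀ k < M, ∑ i ∈ s, v i * f i ^ k = 0) : ∀ i ∈ s, v i = 0 := by
  let e : Fin #s ≃ s := s.equivFin.symm
  have hv : v ∘ (↑) ∘ e = 0 := by
    refine Matrix.eq_zero_of_forall_pow_sum_mul_pow_eq_zero (f := f ∘ (↑) ∘ e) ?_ fun k => ?_
    · exact hf.injective.comp e.injective
    · have hk := h k (k.isLt.trans_le hs)
      rwa [← s.sum_coe_sort, ← e.sum_comp] at hk
  intro i hi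
  simpa [e] using congrFun hv (e.symm ⟨i, hi⟩)

theorem exists_add_notMem_of_card_mul_lt {G : Type*} [AddGroup G] [Fintype G] [DecidableEq G]
    {T A : Finset G} (h : #T * #A < Fintype.card G) : ∃ g, ∀ a ∈ A, g + a ∉ T := by
  obtain ⟨g, hg⟩ : ∃ g, g ∉ T - A := by
    by_contra! hall
    simpa [eq_univ_of_forall hall] using (card_sub_le (s := T) (t := A)).trans_lt h
  exact ⟨g, fun a ha hga => hg (by simpa using sub_mem_sub hga ha)⟩

theorem exists_cyclic_window_disjoint {N : ℕ} [NeZero N] (T : Finset (Fin N)) {L : ℕ}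
    (h : L * #T < N) : ∃ ℓ < N, ∀ j < L, Fin.ofNat N (ℓ + j) ∉ T := by
  have hcard : #T * #((range L).image (Fin.ofNat N)) < Fintype.card (Fin N) :=
    calc #T * #((range L).image (Fin.ofNat N)) ≤ #T * L := by
          gcongr; exact card_image_le.trans (card_range L).le
      _ < Fintype.card (Fin N) := by rw [Fintype.card_fin]; linarith
  obtain ⟨g, hg⟩ := exists_add_notMem_of_card_mul_lt hcard
  refine ⟨g, g.isLt, fun j hj => ?_⟩
  rw [add_comm, ← Fin.ofNat_add, add_comm]
  exact hg _ (mem_image_of_mem _ (mem_range.2 hj))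

theorem l0_sub_le {ι : Type*} [Fintype ι] (x y : ι → ℂ) : l0 (x - y) ≤ l0 x + l0 y := by
  classical
  unfold l0
  refine (card_le_card fun i => ?_).trans (card_union_le _ _)
  simp only [mem_filter, mem_univ, true_and, mem_union, Pi.sub_apply]
  contrapose!
  rintro ⟨hx, hy⟩
  simp [hx, hy]

theorem dft_mulVec_apply {N : ℕ} (x : Fin N → ℂ) (n : Fin N) :
    (dft N *ᵥ x) n = (Real.sqrt N : ℂ)⁻¹ *
      ∑ m, x m * (Complex.exp (2 * Real.pi * Complex.I / N) ^ (m : ℕ)) ^ (n : ℕ) := by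
  simp only [mulVec, dotProduct, dft, mul_sum]
  refine sum_congr rfl fun m _ => ?_
  rw [← pow_mul, ← Complex.exp_nat_mul]
  push_cast
  ring_nf

theorem eq_zero_of_dft_eq_zero_on_window {N : ℕ} [NeZero N] {d : Fin N → ℂ} {M : ℕ}
    (hd : l0 d ≤ M) (ℓ : ℕ)
    (h : ∀ j < M, (dft N *ᵥ d) (Fin.ofNat N (ℓ + j)) = 0) : d = 0 := by
  set ω := Complex.exp (2 * Real.pi * Complex.I / N) with hω_def
  have hω : IsPrimitiveRoot ω N := Complex.isPrimitiveRoot_exp N (NeZero.ne N)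
  have hsqrt : (Real.sqrt N : ℂ) ≠ 0 := by simp [NeZero.ne N]
  have key := Finset.forall_eq_zero_of_sum_mul_pow_eq_zero (s := {m | d m ≠ 0})
    (v := fun m => d m * (ω ^ (m : ℕ)) ^ ℓ) (f := fun m => ω ^ (m : ℕ))
    (fun a _ b _ hab => Fin.ext (hω.pow_inj a.isLt b.isLt hab)) hd (fun k hk => ?_)
  · ext m
    by_contra hm
    exact hm (by simpa [hω.ne_zero (NeZero.ne N)] using key m (by simpa using hm))
  · have hperiodic (m : Fin N) (n : ℕ) : (ω ^ (m : ℕ)) ^ (n % N) = (ω ^ (m : ℕ)) ^ n :=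
      (pow_eq_pow_mod n (by rw [← pow_mul, mul_comm, pow_mul, hω.pow_eq_one, one_pow])).symm
    have hk := h k hk
    rw [dft_mulVec_apply, ← hω_def, mul_eq_zero, inv_eq_zero, or_iff_right hsqrt] at hk
    rw [sum_filter_of_ne fun m _ hm => left_ne_zero_of_mul (left_ne_zero_of_mul hm)]
    simpa only [Fin.val_ofNat, hperiodic, pow_add, mul_assoc] using hk

theorem eq_of_dft_eq_on_window {N : ℕ} [NeZero N] {c c' : Fin N → ℂ} {M : ℕ}
    (hM : l0 c + l0 c' ≤ M) (ℓ : ℕ)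
    (h : ∀ j < M,
      (dft N *ᵥ c) (Fin.ofNat N (ℓ + j)) = (dft N *ᵥ c') (Fin.ofNat N (ℓ + j))) :
    c = c' :=
  sub_eq_zero.1 <| eq_zero_of_dft_eq_zero_on_window ((l0_sub_le c c').trans hM) ℓ
    fun j hj => by rw [mulVec_sub, Pi.sub_apply, h j hj, sub_self]

/-- **ProSparse recovery guarantee for Fourier plus spikes.** If `y = F x_p + x_q` with
`K_p = ‖x_p‖₀ ≥ 1`, `K_q = ‖x_q‖₀ ≥ 1` and `K_p K_q < N / 2`, then there exists a starting
position `ℓ ∈ {0, …, N-1}` such that `y` agrees with `F x_p` on the cyclic window of length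
`2 K_p` starting at `ℓ`; moreover `x_p` is the unique vector with at most `K_p` nonzero entries
whose DFT agrees with `y` on that window. -/
theorem stmt8 (N : ℕ) (xp xq : Fin N → ℂ) (Kp Kq : ℕ)
    (hKp : l0 xp = Kp) (hKq : l0 xq = Kq)
    (hbound : 2 * (Kp * Kq) < N)
    (y : Fin N → ℂ) (hy : y = (dft N).mulVec xp + xq) :
    ∃ ℓ < N,
      (∀ j < 2 * Kp,
        y ⟨(ℓ + j) % N, Nat.mod_lt _ (by omega)⟩ =
          (dft N).mulVec xp ⟨(ℓ + j) % N, Nat.mod_lt _ (by omega)⟩) ∧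
      (∀ c : Fin N → ℂ, l0 c ≤ Kp →
        (∀ j < 2 * Kp,
          (dft N).mulVec c ⟨(ℓ + j) % N, Nat.mod_lt _ (by omega)⟩ =
            y ⟨(ℓ + j) % N, Nat.mod_lt _ (by omega)⟩) →
        c = xp) := by
  have : NeZero N := ⟨by omega⟩
  obtain ⟨ℓ, hℓ, hwindow⟩ := exists_cyclic_window_disjoint {i | xq i ≠ 0} (L := 2 * Kp)
    (by rw [mul_assoc]; rwa [← hKq] at hbound)
  have hagree (j : ℕ) (hj : j < 2 * Kp) :
      y (Fin.ofNat N (ℓ + j)) = (dft N *ᵥ xp) (Fin.ofNat N (ℓ + j)) := by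
    simpa [hy] using hwindow j hj
  -- `Fin.ofNat N n` unfolds to `⟨n % N, _⟩`, the index used in the statement.
  refine ⟨ℓ, hℓ, hagree, fun c hc hcy => ?_⟩
  exact eq_of_dft_eq_on_window (M := 2 * Kp) (by omega) ℓ fun j hj =>
    (hcy j hj).trans (hagree j hj)
end

section
/- Let N, S, L, K be positive integers and let A ⊆ {0, 1, …, N−1} be a set that can be covered by K intervals of length L, i.e., A ⊆ ∪_{i=1}^{K} {m_i, m_i+1, …, m_i+L−1} for some integers m_1, …, m_K. Then the number of starting positions ℓ with 0 ≤ ℓ ≤ N−S such that the interval {ℓ, ℓ+1, …, ℓ+S−1} is disjoint from A is at least N + L − (S + L − 1)(K + 1). -/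
/-! A window starting at `ℓ` can meet `[mᵢ, mᵢ + L)` only if `mᵢ - S < ℓ < mᵢ + L`, so at most
`K (S + L - 1)` of the `N - S + 1` starting positions are bad. -/

open Finset

lemma window_start_mem_Ioo {ℓ j S L : ℕ} {m : ℤ} (hj : j < S)
    (hm : m ≤ ((ℓ + j : ℕ) : ℤ) ∧ ((ℓ + j : ℕ) : ℤ) < m + L) :
    (ℓ : ℤ) ∈ Ioo (m - S) (m + L) := by
  push_cast at hm
  rw [mem_Ioo]
  omega

lemma card_filter_window_meets_le {ι : Type*} [Fintype ι] (S L : ℕ) (A s : Finset ℕ)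
    (m : ι → ℤ) (hcover : ∀ a ∈ A, ∃ i, m i ≤ (a : ℤ) ∧ (a : ℤ) < m i + L) :
    #{ℓ ∈ s | ∃ j < S, ℓ + j ∈ A} ≤ Fintype.card ι * (S + L - 1) := by
  classical
  have hsub : {ℓ ∈ s | ∃ j < S, ℓ + j ∈ A}.image (Nat.cast : ℕ → ℤ) ⊆
      univ.biUnion fun i => Ioo (m i - S) (m i + L) := by
    simp only [subset_iff, mem_image, mem_filter, mem_biUnion, mem_univ, true_and]
    rintro _ ⟨ℓ, ⟨-, j, hj, hjA⟩, rfl⟩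
    obtain ⟨i, hi⟩ := hcover _ hjA
    exact ⟨i, window_start_mem_Ioo hj hi⟩
  calc #{ℓ ∈ s | ∃ j < S, ℓ + j ∈ A}
      = #({ℓ ∈ s | ∃ j < S, ℓ + j ∈ A}.image (Nat.cast : ℕ → ℤ)) :=
        (card_image_of_injective _ Nat.cast_injective).symm
    _ ≤ #(univ.biUnion fun i => Ioo (m i - S) (m i + L)) := card_le_card hsub
    _ ≤ ∑ i, #(Ioo (m i - S) (m i + L)) := card_biUnion_le
    _ = Fintype.card ι * (S + L - 1) := by
        have hwidth (i : ι) : #(Ioo (m i - S) (m i + L)) = S + L - 1 := by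
          rw [Int.card_Ioo]; omega
        simp only [hwidth, sum_const, card_univ, smul_eq_mul]

theorem stmt9_general (N S L K : ℕ) (hS : 1 ≤ S)
    (A : Finset ℕ)
    (m : Fin K → ℤ)
    (hcover : ∀ a ∈ A, ∃ i : Fin K, m i ≤ (a : ℤ) ∧ (a : ℤ) < m i + L) :
    (N : ℤ) + L - ((S : ℤ) + L - 1) * (K + 1) ≤
      (((Finset.range (N - S + 1)).filter (fun ℓ => ∀ j < S, ℓ + j ∉ A)).card : ℤ) := by
  have hsplit := card_filter_add_card_filter_not (s := range (N - S + 1))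
    (fun ℓ => ∃ j < S, ℓ + j ∈ A)
  have hbad := card_filter_window_meets_le S L A (range (N - S + 1)) m hcover
  simp only [not_exists, not_and, card_range, Fintype.card_fin] at hsplit hbad
  have hwidth : ((S + L - 1 : ℕ) : ℤ) = S + L - 1 := by omega
  have hpositions : (N : ℤ) - S ≤ ((N - S : ℕ) : ℤ) := by omega
  zify at hsplit hbad
  rw [hwidth] at hbad
  linarith

/-- **Interval-counting lemma, non-periodic case (τ = 1).** If `A ⊆ {0, …, N-1}` can be
covered by `K` integer intervals of length `L`, then the number of starting positions
`0 ≤ ℓ ≤ N - S` whose window `{ℓ, …, ℓ + S - 1}` is disjoint from `A` is at least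
`N + L - (S + L - 1)(K + 1)`. -/
theorem stmt9 (N S L K : ℕ) (hN : 1 ≤ N) (hS : 1 ≤ S) (hL : 1 ≤ L) (hK : 1 ≤ K)
    (A : Finset ℕ) (hA : A ⊆ Finset.range N)
    (m : Fin K → ℤ)
    (hcover : ∀ a ∈ A, ∃ i : Fin K, m i ≤ (a : ℤ) ∧ (a : ℤ) < m i + L) :
    (N : ℤ) + L - ((S : ℤ) + L - 1) * (K + 1) ≤
      (((Finset.range (N - S + 1)).filter (fun ℓ => ∀ j < S, ℓ + j ∉ A)).card : ℤ) :=
  stmt9_general N S L K hS A m hcover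
end

section
/- Let d ≥ 1, N = 2^{2d−1}, let F be the N × N unitary DFT matrix, let v ∈ ℂ^N be the picket-fence vector with v_n = √2 if 2^d divides n and 0 otherwise, and define z = (v, −Fv) ∈ ℂ^{2N}. Then [F, I] z = F v + I(−Fv) = 0, and z has exactly 2^{d−1} + 2^{d} nonzero entries, of which 2^{d−1} are equal to √2 and 2^{d} are equal to −1 in modulus 1; i.e., the nonzero magnitudes of z consist of 2^{d−1} values equal to √2 and 2^{d} values equal to 1. -/
/-!
For `N = a * K`, the DFT of the picket fence with spacing `a` (value `c`) is the picket fence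
with spacing `K` and value `K c / √N`: its `n`-th entry is `c / √N` times the sum of the `n`-th
powers of the `K`-th roots of unity. For `a = 2^d`, `K = 2^(d-1)` one has `√N = K √2`, so `F v`
is the picket fence of ones; `z = (v, -F v)` is then a null vector of `[F, I]` by construction,
and its support and magnitudes are read off from the two fences.
-/

open scoped Classical

open Finset

theorem IsPrimitiveRoot.geom_sum_pow_eq_ite {R : Type*} [CommRing R] [IsDomain R] {ζ : R} {K : ℕ}
    (hζ : IsPrimitiveRoot ζ K) (n : ℕ) :
    ∑ k ∈ range K, (ζ ^ n) ^ k = if K ∣ n then (K : R) else 0 := by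
  split_ifs with hn
  · simp [(hζ.pow_eq_one_iff_dvd n).2 hn]
  · have hne : ζ ^ n ≠ 1 := mt (hζ.pow_eq_one_iff_dvd n).1 hn
    refine eq_zero_of_ne_zero_of_mul_left_eq_zero (sub_ne_zero_of_ne hne.symm) ?_
    rw [mul_neg_geom_sum, ← pow_mul, mul_comm, pow_mul, hζ.pow_eq_one, one_pow, sub_self]

theorem range_mul_filter_dvd {a : ℕ} (ha : 0 < a) (K : ℕ) :
    {m ∈ range (a * K) | a ∣ m} = (range K).image (a * ·) := by
  ext m
  simp only [mem_filter, mem_range, mem_image]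
  constructor
  · rintro ⟨hm, k, rfl⟩
    exact ⟨k, lt_of_mul_lt_mul_left hm (Nat.zero_le a), rfl⟩
  · rintro ⟨k, hk, rfl⟩
    exact ⟨mul_lt_mul_of_pos_left hk ha, dvd_mul_right a k⟩

theorem card_filter_dvd_fin_of_eq_mul {a K N : ℕ} (ha : 0 < a) (hN : N = a * K) :
    #{n : Fin N | a ∣ (n : ℕ)} = K := by
  subst hN
  rw [card_filter, Fin.sum_univ_eq_sum_range (fun n => if a ∣ n then 1 else 0), ← card_filter,
    range_mul_filter_dvd ha, card_image_of_injective _ (mul_right_injective₀ ha.ne'), card_range]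

theorem sum_range_mul_ite_dvd {M : Type*} [AddCommMonoid M] {a : ℕ} (ha : 0 < a) (K : ℕ)
    (f : ℕ → M) :
    ∑ m ∈ range (a * K), (if a ∣ m then f m else 0) = ∑ k ∈ range K, f (a * k) := by
  rw [← sum_filter, range_mul_filter_dvd ha,
    sum_image fun x _ y _ h => mul_right_injective₀ ha.ne' h]

theorem dft_mulVec_picketFence {a K N : ℕ} (hN : N = a * K) (c : ℂ) (n : Fin N) :
    (dft N).mulVec (fun m => if a ∣ (m : ℕ) then c else 0) n =
      if K ∣ (n : ℕ) then K * c / Real.sqrt N else 0 := by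
  have hN0 : N ≠ 0 := n.pos.ne'
  have ha : 0 < a := Nat.pos_of_ne_zero (by rintro rfl; simp_all)
  have hK : K ≠ 0 := by rintro rfl; simp_all
  set ζ := Complex.exp (2 * Real.pi * Complex.I / K)
  have hentry : ∀ k : ℕ, Complex.exp (2 * Real.pi * Complex.I * (n : ℕ) * ↑(a * k) / N) =
      (ζ ^ (n : ℕ)) ^ k := by
    intro k
    have hNc : (N : ℂ) = a * K := by exact_mod_cast hN
    have ha' : (a : ℂ) ≠ 0 := by exact_mod_cast ha.ne'
    rw [← pow_mul, ← Complex.exp_nat_mul, hNc]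
    congr 1
    push_cast
    field_simp
  calc (dft N).mulVec (fun m => if a ∣ (m : ℕ) then c else 0) n
      = ∑ m ∈ range (a * K), if a ∣ m then
          Complex.exp (2 * Real.pi * Complex.I * (n : ℕ) * m / N) / Real.sqrt N * c else 0 := by
        rw [← hN, Matrix.mulVec, dotProduct, ← Fin.sum_univ_eq_sum_range
          (fun m => if a ∣ m then _ else 0)]
        refine sum_congr rfl fun m _ => ?_
        split_ifs <;> simp [dft]
    _ = (∑ k ∈ range K, (ζ ^ (n : ℕ)) ^ k) * c / Real.sqrt N := by
        rw [sum_range_mul_ite_dvd ha, sum_mul, sum_div]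
        refine sum_congr rfl fun k _ => ?_
        rw [hentry]
        ring
    _ = _ := by
        rw [(Complex.isPrimitiveRoot_exp K hK).geom_sum_pow_eq_ite]
        split_ifs <;> simp

theorem card_filter_univ_sum {α β : Type*} [Fintype α] [Fintype β] (p : α ⊕ β → Prop)
    [DecidablePred p] :
    #{x | p x} = #{a | p (Sum.inl a)} + #{b | p (Sum.inr b)} := by
  simp only [card_filter, Fintype.sum_sum_type]

theorem two_pow_two_mul_sub_one {d : ℕ} (hd : 1 ≤ d) : 2 ^ (2 * d - 1) = 2 ^ d * 2 ^ (d - 1) := by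
  rw [← pow_add]; congr 1; omega

theorem dft_mulVec_picketFence_sqrt_two {d : ℕ} (hd : 1 ≤ d) (n : Fin (2 ^ (2 * d - 1))) :
    (dft _).mulVec (fun m => if 2 ^ d ∣ (m : ℕ) then (Real.sqrt 2 : ℂ) else 0) n =
      if 2 ^ (d - 1) ∣ (n : ℕ) then 1 else 0 := by
  have hsqrtN : Real.sqrt (2 ^ (2 * d - 1) : ℕ) = 2 ^ (d - 1) * Real.sqrt 2 := by
    have hN : 2 ^ (2 * d - 1) = 2 ^ (d - 1) * 2 ^ (d - 1) * 2 := by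
      rw [← pow_add, ← pow_succ]; congr 1; omega
    rw [hN]
    push_cast
    rw [Real.sqrt_mul (by positivity), Real.sqrt_mul_self (by positivity)]
  rw [dft_mulVec_picketFence (two_pow_two_mul_sub_one hd), hsqrtN]
  push_cast
  split_ifs <;> field_simp

/-- **The null vector `z = (v, -Fv)` of `[F, I]`.** With `d ≥ 1`, `N = 2^(2d-1)`, `v` the
picket-fence vector with entries `√2` at the multiples of `2^d`, and `z = (v, -Fv) ∈ ℂ^(2N)`,
one has `[F, I] z = F v + (-F v) = 0`, and `z` has exactly `2^(d-1) + 2^d` nonzero entries,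
whose magnitudes consist of `2^(d-1)` values equal to `√2` and `2^d` values equal to `1`. -/
theorem stmt12 (d : ℕ) (hd : 1 ≤ d) (N : ℕ) (hN : N = 2 ^ (2 * d - 1))
    (v : Fin N → ℂ)
    (hv : ∀ n : Fin N, v n = if 2 ^ d ∣ (n : ℕ) then (Real.sqrt 2 : ℂ) else 0)
    (z : Fin N ⊕ Fin N → ℂ) (hz : z = Sum.elim v (-(dft N).mulVec v)) :
    (dft N).mulVec (fun n => z (Sum.inl n)) + (fun n => z (Sum.inr n)) = 0 ∧
    (Finset.univ.filter (fun i => z i ≠ 0)).card = 2 ^ (d - 1) + 2 ^ d ∧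
    (Finset.univ.filter (fun i => ‖z i‖ = Real.sqrt 2)).card = 2 ^ (d - 1) ∧
    (Finset.univ.filter (fun i => ‖z i‖ = 1)).card = 2 ^ d := by
  subst hz hN
  have hFv (n) : (dft _).mulVec v n = if 2 ^ (d - 1) ∣ (n : ℕ) then 1 else 0 := by
    rw [funext hv, dft_mulVec_picketFence_sqrt_two hd]
  have hv_norm (n) : ‖v n‖ = if 2 ^ d ∣ (n : ℕ) then Real.sqrt 2 else 0 := by
    rw [hv n]; split_ifs <;> simp
  have hFv_norm (n) : ‖(-(dft _).mulVec v) n‖ = if 2 ^ (d - 1) ∣ (n : ℕ) then 1 else 0 := by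
    rw [Pi.neg_apply, norm_neg, hFv n]; split_ifs <;> simp
  have hcard_v := card_filter_dvd_fin_of_eq_mul (Nat.two_pow_pos d) (two_pow_two_mul_sub_one hd)
  have hcard_Fv := card_filter_dvd_fin_of_eq_mul (Nat.two_pow_pos (d - 1))
    ((two_pow_two_mul_sub_one hd).trans (mul_comm _ _))
  have hs0 : Real.sqrt 2 ≠ 0 := by simp
  have hs1 : Real.sqrt 2 ≠ 1 := by simp
  refine ⟨add_neg_cancel _, ?_, ?_, ?_⟩
  · simp only [card_filter_univ_sum, Sum.elim_inl, Sum.elim_inr, hv, Pi.neg_apply, hFv]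
    simp [hcard_v, hcard_Fv, hs0]
  · simp only [card_filter_univ_sum, Sum.elim_inl, Sum.elim_inr, hv_norm, hFv_norm]
    simp [ite_eq_iff, hcard_v, hs1.symm, hs0.symm]
  · simp only [card_filter_univ_sum, Sum.elim_inl, Sum.elim_inr, hv_norm, hFv_norm]
    simp [ite_eq_iff, hcard_Fv, hs1]
end

section
/- Let D be any complex M × n matrix and let z ∈ ℂ^n satisfy Dz = 0. Let Λ ⊆ {0, …, n−1} be a set of K indices such that ‖z‖₁ < 2 Σ_{i∈Λ} |z_i|. Define x ∈ ℂ^n by x_i = −2 z_i for i ∈ Λ and x_i = 0 otherwise, and define x̃ = z + x. Then D x̃ = D x, x has at most K nonzero entries, and ‖x̃‖₁ = ‖z‖₁ < ‖x‖₁. Consequently, x is not a minimizer of ‖w‖₁ subject to Dw = Dx. -/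
open Finset Matrix

theorem l0_le_card_of_forall_notMem_eq_zero {ι : Type*} [Fintype ι] (x : ι → ℂ) (s : Finset ι)
    (hx : ∀ i ∉ s, x i = 0) : l0 x ≤ s.card :=
  card_le_card fun i hi => by_contra fun h => (mem_filter.1 hi).2 (hx i h)

section SignFlip

variable {ι 𝕜 : Type*} [DecidableEq ι] [RCLike 𝕜] {Λ : Finset ι} {z x : ι → 𝕜}

theorem norm_add_eq_of_eq_ite_neg_two_mul (hx : ∀ i, x i = if i ∈ Λ then -2 * z i else 0)
    (i : ι) : ‖z i + x i‖ = ‖z i‖ := by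
  rw [hx i]
  split_ifs
  · rw [show z i + -2 * z i = -z i by ring, norm_neg]
  · rw [add_zero]

theorem sum_norm_eq_of_eq_ite_neg_two_mul [Fintype ι]
    (hx : ∀ i, x i = if i ∈ Λ then -2 * z i else 0) :
    ∑ i, ‖x i‖ = 2 * ∑ i ∈ Λ, ‖z i‖ := by
  simp [hx, apply_ite, norm_mul, sum_ite_mem, mul_sum]

end SignFlip

/-- **The general mechanism for constructing `ℓ₁` counterexamples.** Let `D z = 0` and let
`Λ` be a set of `K` indices such that `‖z‖₁ < 2 ∑_{i ∈ Λ} |z i|`. Define `x` by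
`x i = -2 z i` on `Λ` and `0` elsewhere, and `x̃ = z + x`. Then `D x̃ = D x`, `x` has at most
`K` nonzero entries, `‖x̃‖₁ = ‖z‖₁ < ‖x‖₁`, and consequently `x` does not minimize `‖w‖₁`
subject to `D w = D x`. -/
theorem stmt14 (M n K : ℕ) (D : Matrix (Fin M) (Fin n) ℂ)
    (z : Fin n → ℂ) (hz : D.mulVec z = 0)
    (Λ : Finset (Fin n)) (hΛ : Λ.card = K)
    (hz1 : ∑ i : Fin n, ‖z i‖ < 2 * ∑ i ∈ Λ, ‖z i‖)
    (x : Fin n → ℂ) (hx : ∀ i, x i = if i ∈ Λ then -2 * z i else 0)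
    (xt : Fin n → ℂ) (hxt : xt = z + x) :
    D.mulVec xt = D.mulVec x ∧
    l0 x ≤ K ∧
    (∑ i : Fin n, ‖xt i‖ = ∑ i : Fin n, ‖z i‖) ∧
    (∑ i : Fin n, ‖z i‖ < ∑ i : Fin n, ‖x i‖) ∧
    ∃ w : Fin n → ℂ, D.mulVec w = D.mulVec x ∧
      ∑ i : Fin n, ‖w i‖ < ∑ i : Fin n, ‖x i‖ := by
  subst hxt
  have hfeasible : D *ᵥ (z + x) = D *ᵥ x := by rw [mulVec_add, hz, zero_add]
  have hsparse : l0 x ≤ K :=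
    hΛ ▸ l0_le_card_of_forall_notMem_eq_zero x Λ fun i hi => by rw [hx i, if_neg hi]
  have hnorm : ∑ i, ‖(z + x) i‖ = ∑ i, ‖z i‖ :=
    sum_congr rfl fun i _ => norm_add_eq_of_eq_ite_neg_two_mul hx i
  have hlt : ∑ i, ‖z i‖ < ∑ i, ‖x i‖ := by rwa [sum_norm_eq_of_eq_ite_neg_two_mul hx]
  exact ⟨hfeasible, hsparse, hnorm, hlt, z + x, hfeasible, hnorm ▸ hlt⟩
end

section
/- For every d ≥ 2, with N = 2^{2d−1}, D = [F, I] the N × 2N union of the unitary DFT matrix and the identity, and K = 3·2^{d−2}, there exist two distinct vectors x_0, x_1 ∈ ℂ^{2N}, each with at most K nonzero entries, such that D x_0 = D x_1. Moreover, √N < K < √(2N); that is, the common sparsity level exceeds the uniqueness bound √N for (P0) but remains below the ProSparse bound √(2N). -/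
/-- The synthesis map of the dictionary `[F, I]` : it sends `w = (a, b) ∈ ℂ^(2N)` to
`F a + b ∈ ℂ^N`. -/
noncomputable def synth (N : ℕ) (w : Fin N ⊕ Fin N → ℂ) : Fin N → ℂ :=
  (dft N).mulVec (w ∘ Sum.inl) + (w ∘ Sum.inr)

/-!
The DFT maps the Dirac comb of spacing `a` in `ℂ^N`, `N = a b`, to `b / √N` times the Dirac comb
of spacing `b`, because the sum of the powers of a `b`-th root of unity vanishes unless the root
is `1`. For `N = 8 e²` the comb of spacing `4 e` (`2 e` spikes) in the Fourier half, together with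
`-2e/√N` times the comb of spacing `8 e` (`e` spikes) in the identity half, therefore synthesises
the same signal as `2e/√N` times the comb of spacing `2 e` with its `e` spikes at multiples of
`8 e` removed, placed in the identity half alone. Both representations have `3 e` nonzero
entries, and `8 e² < (3 e)² < 16 e²`.
-/

open Finset Complex
open scoped Matrix

lemma filter_dvd_range_mul {q : ℕ} (hq : 0 < q) (t : ℕ) :
    {j ∈ range (q * t) | q ∣ j} = (range t).image (q * ·) := by
  ext j
  simp only [mem_filter, mem_range, mem_image]
  constructor
  · rintro ⟨hj, k, rfl⟩
    exact ⟨k, Nat.lt_of_mul_lt_mul_left hj, rfl⟩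
  · rintro ⟨k, hk, rfl⟩
    exact ⟨Nat.mul_lt_mul_of_pos_left hk hq, dvd_mul_right q k⟩

lemma sum_fin_ite_dvd {M : Type*} [AddCommMonoid M] {N q t : ℕ} (hq : 0 < q) (hN : N = q * t)
    (f : ℕ → M) :
    ∑ j : Fin N, (if q ∣ (j : ℕ) then f j else 0) = ∑ k ∈ range t, f (q * k) := by
  subst hN
  rw [Fin.sum_univ_eq_sum_range (fun j => if q ∣ j then f j else 0), ← sum_filter,
    filter_dvd_range_mul hq, sum_image fun _ _ _ _ h => Nat.eq_of_mul_eq_mul_left hq h]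

lemma card_filter_dvd_fin {N q t : ℕ} (hq : 0 < q) (hN : N = q * t) :
    #{j : Fin N | q ∣ (j : ℕ)} = t := by
  simp [card_filter, sum_fin_ite_dvd hq hN fun _ => 1]

lemma IsPrimitiveRoot.sum_range_pow_pow {K : Type*} [Field K] {ω : K} {t : ℕ}
    (hω : IsPrimitiveRoot ω t) (m : ℕ) :
    ∑ k ∈ range t, (ω ^ m) ^ k = if t ∣ m then (t : K) else 0 := by
  split_ifs with h
  · simp [(hω.pow_eq_one_iff_dvd m).2 h]
  · have hne : ω ^ m ≠ 1 := fun h1 => h ((hω.pow_eq_one_iff_dvd m).1 h1)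
    rw [geom_sum_eq hne, ← pow_mul, mul_comm, pow_mul, hω.pow_eq_one, one_pow, sub_self,
      zero_div]

def diracComb (N q : ℕ) : Fin N → ℂ := fun j => if q ∣ (j : ℕ) then 1 else 0

lemma dft_mulVec_diracComb {N q t : ℕ} (hq : 0 < q) (ht : 0 < t) (hN : N = q * t) :
    dft N *ᵥ diracComb N q = ((t : ℂ) / Real.sqrt N) • diracComb N t := by
  ext m
  set ω := exp (2 * Real.pi * I / t)
  have hentry (k : ℕ) :
      exp (2 * Real.pi * I * (m : ℕ) * (q * k : ℕ) / N) = (ω ^ (m : ℕ)) ^ k := by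
    have hq' : (q : ℂ) ≠ 0 := by exact_mod_cast hq.ne'
    have ht' : (t : ℂ) ≠ 0 := by exact_mod_cast ht.ne'
    have hN' : (N : ℂ) = q * t := by exact_mod_cast hN
    rw [← exp_nat_mul, ← exp_nat_mul, hN']
    congr 1
    push_cast
    field_simp
  simp only [Matrix.mulVec, dotProduct, dft, diracComb, mul_ite, mul_one, mul_zero]
  rw [sum_fin_ite_dvd hq hN fun j => exp (2 * Real.pi * I * (m : ℕ) * j / N) / (Real.sqrt N : ℂ)]
  simp only [hentry, ← sum_div, Pi.smul_apply, smul_eq_mul]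
  rw [(isPrimitiveRoot_exp t ht.ne').sum_range_pow_pow, diracComb]
  split_ifs <;> ring

section l0

variable {ι κ : Type*} [Fintype ι] [Fintype κ]

lemma l0_zero : l0 (0 : ι → ℂ) = 0 := by
  simp [l0]

lemma l0_smul {c : ℂ} (hc : c ≠ 0) (x : ι → ℂ) : l0 (c • x) = l0 x := by
  simp [l0, hc]

lemma l0_sum_elim (x : ι → ℂ) (y : κ → ℂ) : l0 (Sum.elim x y) = l0 x + l0 y := by
  simp only [l0, card_filter, Fintype.sum_sum_type, Sum.elim_inl, Sum.elim_inr]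
  rfl

lemma l0_eq_card {x : ι → ℂ} (s : Finset ι) (h : ∀ i, x i ≠ 0 ↔ i ∈ s) : l0 x = #s := by
  rw [l0]
  congr 1
  ext i
  simp [h]

end l0

lemma l0_diracComb {N q t : ℕ} (hq : 0 < q) (hN : N = q * t) : l0 (diracComb N q) = t := by
  rw [← card_filter_dvd_fin hq hN]
  exact l0_eq_card _ fun j => by simp [diracComb]

lemma l0_diracComb_sub {N b r u s : ℕ} (hb : 0 < b) (hr : 0 < r) (hbr : b ∣ r)
    (hNb : N = b * u) (hNr : N = r * s) :
    l0 (diracComb N b - diracComb N r) = u - s := by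
  have hsub : ({j | r ∣ (j : ℕ)} : Finset (Fin N)) ⊆ ({j | b ∣ (j : ℕ)} : Finset (Fin N)) :=
    monotone_filter_right _ fun _ _ => hbr.trans
  rw [l0_eq_card _ fun j => ?_, card_sdiff_of_subset hsub, card_filter_dvd_fin hb hNb,
    card_filter_dvd_fin hr hNr]
  by_cases hj : r ∣ (j : ℕ)
  · simp [diracComb, hj, hbr.trans hj]
  · simp [diracComb, hj]

theorem exists_ne_synth_eq_of_dvd {N a b r s : ℕ} (ha : 0 < a) (hb : 0 < b) (hr : 0 < r)
    (hbr : b ∣ r) (hNab : N = a * b) (hNrs : N = r * s) :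
    ∃ x0 x1 : Fin N ⊕ Fin N → ℂ, x0 ≠ x1 ∧ l0 x0 = b + s ∧ l0 x1 = a - s ∧
      synth N x0 = synth N x1 := by
  set c : ℂ := (b : ℂ) / Real.sqrt N
  have hN : 0 < N := hNab ▸ Nat.mul_pos ha hb
  have hc : c ≠ 0 := div_ne_zero (by exact_mod_cast hb.ne') (by simpa using hN.ne')
  refine ⟨Sum.elim (diracComb N a) (-c • diracComb N r),
    Sum.elim 0 (c • (diracComb N b - diracComb N r)), fun h => ?_, ?_, ?_, ?_⟩
  · simpa [diracComb] using congrFun h (Sum.inl ⟨0, hN⟩)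
  · rw [l0_sum_elim, l0_smul (neg_ne_zero.2 hc), l0_diracComb ha hNab, l0_diracComb hr hNrs]
  · rw [l0_sum_elim, l0_zero, l0_smul hc,
      l0_diracComb_sub hb hr hbr (hNab.trans (mul_comm a b)) hNrs, zero_add]
  · simp only [synth, Sum.elim_comp_inl, Sum.elim_comp_inr, dft_mulVec_diracComb ha hb hNab,
      Matrix.mulVec_zero, smul_sub, neg_smul]
    abel

/-- **Two distinct `K`-sparse representations beyond the `(P0)` uniqueness bound.** For every
`d ≥ 2`, with `N = 2^(2d-1)` and `K = 3 ⬝ 2^(d-2)`, there exist two distinct vectors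
`x₀, x₁ ∈ ℂ^(2N)`, each with at most `K` nonzero entries, such that
`[F, I] x₀ = [F, I] x₁`; moreover `√N < K < √(2N)`. -/
theorem stmt16 (d : ℕ) (hd : 2 ≤ d) (N : ℕ) (hN : N = 2 ^ (2 * d - 1))
    (K : ℕ) (hK : K = 3 * 2 ^ (d - 2)) :
    ∃ x0 x1 : Fin N ⊕ Fin N → ℂ, x0 ≠ x1 ∧
      l0 x0 ≤ K ∧ l0 x1 ≤ K ∧
      synth N x0 = synth N x1 ∧
      Real.sqrt N < (K : ℝ) ∧ (K : ℝ) < Real.sqrt (2 * N) := by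
  set e := 2 ^ (d - 2)
  have he : 0 < e := by positivity
  have hN8 : N = 8 * e ^ 2 := by
    rw [hN, ← pow_mul, show 8 = 2 ^ 3 by rfl, ← pow_add]
    congr 1
    omega
  obtain ⟨x0, x1, hne, h0, h1, hsynth⟩ :=
    exists_ne_synth_eq_of_dvd (N := N) (a := 4 * e) (b := 2 * e) (r := 8 * e) (s := e)
      (by omega) (by omega) (by omega) ⟨4, by ring⟩ (by rw [hN8]; ring)
      (by rw [hN8]; ring)
  have heR : (1 : ℝ) ≤ e := by exact_mod_cast he
  refine ⟨x0, x1, hne, by omega, by omega, hsynth, ?_, ?_⟩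
  · rw [hK, hN8, Real.sqrt_lt' (by positivity)]
    push_cast
    nlinarith
  · rw [hK, hN8, Real.lt_sqrt (by positivity)]
    push_cast
    nlinarith
end
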